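/- arXiv:2409.19263 — 3 statements merged into one kernel-verified Lean document; each statement's English description precedes it below -/
import Mathlib

section
/- Let E = {0,1} with irreducible 0-1 incidence matrix A having spectral radius r(A) > 1, and suppose the deterministic counting function satisfies C·r(A)^n ≤ N_ρ(−n log α) ≤ D·r(A)^n for all large n and some constants C, D > 0. In the random system with Z = {z,w}, 0 < z < w < 1, Bernoulli weights p, q = 1−p ∈ (0,1), set δ_Λ := −log r(A)/(log α + p log z + q log w). If along a subsequence n_i one has s_{n_i,z}(λ) − p n_i ∈ [m−1, m] for a fixed integer m, then C' (z/w)^{δ_Λ m} ≤ N_ρ^λ(T_i)/exp(δ_Λ T_i) ≤ D' (z/w)^{δ_Λ m} for all large i, where C' = C·w^{δ_Λ}, D' = D·z^{−δ_Λ}, and T_i = −S_{n_i}F(ωρ,λ). -/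
open Filter Real

/-!
With `L = log α + p log z + q log w` and `q = 1 - p`, the Birkhoff sum splits as
`n L + (s - p n) log (z / w)`, and `δ_Λ L = -log r`. Hence `exp (δ_Λ T_n) = r^n (z/w)^{-δ_Λ (s - p n)}`,
so the ratio in question is `(N_det n / r^n) · (z/w)^{δ_Λ (s - p n)}`: the first factor lies in
`[C, D]` and, since the deviation `s - p n` lies in `[m - 1, m]`, the second one lies in
`[w^{δ_Λ} (z/w)^{δ_Λ m}, z^{-δ_Λ} (z/w)^{δ_Λ m}]`.
-/

theorem log_add_mul_log_add_mul_log_neg {α z w p q : ℝ} (hα0 : 0 < α) (hα1 : α < 1)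
    (hz0 : 0 ≤ z) (hz1 : z ≤ 1) (hw0 : 0 ≤ w) (hw1 : w ≤ 1) (hp : 0 ≤ p) (hq : 0 ≤ q) :
    Real.log α + p * Real.log z + q * Real.log w < 0 := by
  have := Real.log_neg hα0 hα1
  have := mul_nonpos_of_nonneg_of_nonpos hp (Real.log_nonpos hz0 hz1)
  have := mul_nonpos_of_nonneg_of_nonpos hq (Real.log_nonpos hw0 hw1)
  linarith

theorem exp_mul_neg_birkhoff_sum {r α z w p δ s : ℝ} (n : ℕ) (hr : 0 < r) (hz : 0 < z)
    (hw : 0 < w)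
    (hδ : δ * (Real.log α + p * Real.log z + (1 - p) * Real.log w) = -Real.log r) :
    Real.exp (δ * -(n * Real.log α + s * Real.log z + (n - s) * Real.log w)) =
      r ^ n * (z / w) ^ (-(δ * (s - p * n))) := by
  have hsplit : δ * -(n * Real.log α + s * Real.log z + (n - s) * Real.log w) =
      n * Real.log r + Real.log (z / w) * -(δ * (s - p * n)) := by
    rw [Real.log_div hz.ne' hw.ne']
    linear_combination (-(n : ℝ)) * hδ
  rw [hsplit, Real.exp_add, Real.rpow_def_of_pos (div_pos hz hw), ← Real.log_pow,
    Real.exp_log (pow_pos hr n)]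

theorem div_rpow_bounds_of_mem_window {z w δ t m : ℝ} (hz : 0 < z) (hzw : z ≤ w) (hw : w ≤ 1)
    (hδ : 0 ≤ δ) (hmt : m - 1 ≤ t) (htm : t ≤ m) :
    w ^ δ * (z / w) ^ (δ * m) ≤ (z / w) ^ (δ * t) ∧
      (z / w) ^ (δ * t) ≤ z ^ (-δ) * (z / w) ^ (δ * m) := by
  have hw0 : 0 < w := hz.trans_le hzw
  have hB0 : 0 < z / w := div_pos hz hw0
  have hB1 : z / w ≤ 1 := (div_le_one hw0).mpr hzw
  have hwδ : w ^ δ ≤ 1 := Real.rpow_le_one hw0.le hw hδ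
  have hBm : 0 ≤ (z / w) ^ (δ * m) := (Real.rpow_pos_of_pos hB0 _).le
  constructor
  · calc w ^ δ * (z / w) ^ (δ * m) ≤ (z / w) ^ (δ * m) := mul_le_of_le_one_left hBm hwδ
      _ ≤ (z / w) ^ (δ * t) :=
        Real.rpow_le_rpow_of_exponent_ge hB0 hB1 (mul_le_mul_of_nonneg_left htm hδ)
  · calc (z / w) ^ (δ * t) ≤ (z / w) ^ (δ * (m - 1)) :=
          Real.rpow_le_rpow_of_exponent_ge hB0 hB1 (mul_le_mul_of_nonneg_left hmt hδ)
      _ = w ^ δ * z ^ (-δ) * (z / w) ^ (δ * m) := by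
        rw [mul_sub, mul_one, Real.rpow_sub hB0, Real.div_rpow hz.le hw0.le δ, Real.rpow_neg hz.le]
        field_simp
      _ ≤ z ^ (-δ) * (z / w) ^ (δ * m) := by
        rw [mul_assoc]
        exact mul_le_of_le_one_left (by positivity) hwδ

theorem window_pinching_general (r : ℝ) (hr : 1 < r) (C D : ℝ) (hC : 0 < C)
    (α z w p q : ℝ) (hα : 0 < α ∧ α < 1) (hz : 0 < z) (hzw : z < w) (hw : w < 1)
    (hp : 0 < p ∧ p < 1) (hq : q = 1 - p)
    (δΛ : ℝ) (hδΛ : δΛ = -Real.log r / (Real.log α + p * Real.log z + q * Real.log w))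
    (Ndet : ℕ → ℝ)
    (hdet : ∀ᶠ n in atTop, C * r ^ n ≤ Ndet n ∧ Ndet n ≤ D * r ^ n)
    (s : ℕ → ℕ)
    (T : ℕ → ℝ)
    (hT : ∀ n, T n = -((n : ℝ) * Real.log α + (s n : ℝ) * Real.log z +
      ((n : ℝ) - (s n : ℝ)) * Real.log w))
    (Nrand : ℝ → ℝ) (hNrand : ∀ n, Nrand (T n) = Ndet n)
    (ni : ℕ → ℕ) (hni : StrictMono ni)
    (m : ℤ)
    (hwin : ∀ i, (m : ℝ) - 1 ≤ (s (ni i) : ℝ) - p * (ni i : ℝ) ∧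
      (s (ni i) : ℝ) - p * (ni i : ℝ) ≤ (m : ℝ)) :
    ∀ᶠ i in atTop,
      C * w ^ δΛ * (z / w) ^ (δΛ * (m : ℝ)) ≤ Nrand (T (ni i)) / Real.exp (δΛ * T (ni i)) ∧
      Nrand (T (ni i)) / Real.exp (δΛ * T (ni i)) ≤
        D * z ^ (-δΛ) * (z / w) ^ (δΛ * (m : ℝ)) := by
  have hw0 : 0 < w := hz.trans hzw
  have hr0 : 0 < r := one_pos.trans hr
  have hL := log_add_mul_log_add_mul_log_neg hα.1 hα.2 hz.le (hzw.trans hw).le hw0.le hw.le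
    hp.1.le (by linarith [hp.2] : 0 ≤ q)
  have hδ : 0 ≤ δΛ := hδΛ ▸ div_nonneg_of_nonpos (by linarith [Real.log_pos hr]) hL.le
  have hδL : δΛ * (Real.log α + p * Real.log z + (1 - p) * Real.log w) = -Real.log r := by
    rw [hδΛ, ← hq, div_mul_cancel₀ _ hL.ne]
  filter_upwards [hni.tendsto_atTop.eventually hdet] with i ⟨hlo, hhi⟩
  have hrn : 0 < r ^ ni i := pow_pos hr0 _
  have hratio : Nrand (T (ni i)) / Real.exp (δΛ * T (ni i)) =
      Ndet (ni i) / r ^ ni i * (z / w) ^ (δΛ * ((s (ni i) : ℝ) - p * ni i)) := by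
    rw [hNrand, hT, exp_mul_neg_birkhoff_sum _ hr0 hz hw0 hδL, Real.rpow_neg (div_pos hz hw0).le]
    field_simp
  have hCN : C ≤ Ndet (ni i) / r ^ ni i := (le_div_iff₀ hrn).mpr hlo
  have hND : Ndet (ni i) / r ^ ni i ≤ D := (div_le_iff₀ hrn).mpr hhi
  obtain ⟨hBlo, hBhi⟩ :=
    div_rpow_bounds_of_mem_window hz hzw.le hw.le hδ (hwin i).1 (hwin i).2
  rw [hratio, mul_assoc, mul_assoc]
  exact ⟨mul_le_mul hCN hBlo (by positivity) (hC.le.trans hCN),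
    (mul_le_mul_of_nonneg_left hBhi (hC.le.trans hCN)).trans
      (mul_le_mul_of_nonneg_right hND (by positivity))⟩

/-- window pinching. With `δ_Λ = −log r(A)/(log α + p log z + q log w)`,
deterministic counting `C r(A)^n ≤ N_ρ(−n log α) ≤ D r(A)^n` for large `n`, and a
subsequence `n_i` with `s_{n_i,z}(λ) − p n_i ∈ [m−1, m]`, one has
`C w^{δ_Λ} (z/w)^{δ_Λ m} ≤ N_ρ^λ(T_i)/exp(δ_Λ T_i) ≤ D z^{−δ_Λ} (z/w)^{δ_Λ m}`
for all large `i`, where `T_i = −S_{n_i}F(ωρ,λ)`. -/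
theorem window_pinching (r : ℝ) (hr : 1 < r) (C D : ℝ) (hC : 0 < C) (hD : 0 < D)
    (α z w p q : ℝ) (hα : 0 < α ∧ α < 1) (hz : 0 < z) (hzw : z < w) (hw : w < 1)
    (hp : 0 < p ∧ p < 1) (hq : q = 1 - p)
    (δΛ : ℝ) (hδΛ : δΛ = -Real.log r / (Real.log α + p * Real.log z + q * Real.log w))
    (Ndet : ℕ → ℝ)
    (hdet : ∀ᶠ n in atTop, C * r ^ n ≤ Ndet n ∧ Ndet n ≤ D * r ^ n)
    (s : ℕ → ℕ) (hs : ∀ n, s n ≤ n)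
    (T : ℕ → ℝ)
    (hT : ∀ n, T n = -((n : ℝ) * Real.log α + (s n : ℝ) * Real.log z +
      ((n : ℝ) - (s n : ℝ)) * Real.log w))
    (Nrand : ℝ → ℝ) (hNrand : ∀ n, Nrand (T n) = Ndet n)
    (ni : ℕ → ℕ) (hni : StrictMono ni)
    (m : ℤ)
    (hwin : ∀ i, (m : ℝ) - 1 ≤ (s (ni i) : ℝ) - p * (ni i : ℝ) ∧
      (s (ni i) : ℝ) - p * (ni i : ℝ) ≤ (m : ℝ)) :
    ∀ᶠ i in atTop,
      C * w ^ δΛ * (z / w) ^ (δΛ * (m : ℝ)) ≤ Nrand (T (ni i)) / Real.exp (δΛ * T (ni i)) ∧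
      Nrand (T (ni i)) / Real.exp (δΛ * T (ni i)) ≤
        D * z ^ (-δΛ) * (z / w) ^ (δΛ * (m : ℝ)) :=
  window_pinching_general r hr C D hC α z w p q hα hz hzw hw hp hq δΛ hδΛ Ndet hdet s T hT Nrand
    hNrand ni hni m hwin
end

section
/- Under the assumptions of the previous statement, if the random walk s_{n,z}(λ) − n p takes every integer-window value [m−1, m] infinitely often for every integer m (fluctuation property, true for ν-a.e. λ by the law of the iterated logarithm), then liminf_{T→∞} N_ρ^λ(T)/exp(δ_Λ T) = 0 and limsup_{T→∞} N_ρ^λ(T)/exp(δ_Λ T) = ∞. -/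
open Filter Topology

/-! Windows `m → +∞` give times at which the ratio is at most `D' (z/w)^{δ_Λ m} → 0`, and
windows `m → -∞` give times at which it is at least `C' (z/w)^{δ_Λ m} → ∞`. -/

section

variable {α ι : Type*} {l : Filter α} {L : Filter ι} [L.NeBot] {f : α → ℝ} {u : ι → ℝ}

theorem Filter.liminf_ofReal_eq_zero_of_frequently_le (hu : Tendsto u L (𝓝 0))
    (h : ∀ i, ∃ᶠ x in l, f x ≤ u i) :
    liminf (fun x => ENNReal.ofReal (f x)) l = 0 :=
  nonpos_iff_eq_zero.1 <| by
    simpa using ge_of_tendsto' (ENNReal.tendsto_ofReal hu) fun i =>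
      liminf_le_of_frequently_le' ((h i).mono fun _ hx => ENNReal.ofReal_le_ofReal hx)

theorem Filter.limsup_ofReal_eq_top_of_frequently_ge (hu : Tendsto u L atTop)
    (h : ∀ i, ∃ᶠ x in l, u i ≤ f x) :
    limsup (fun x => ENNReal.ofReal (f x)) l = ⊤ :=
  top_le_iff.1 <| le_of_tendsto' (ENNReal.tendsto_ofReal_atTop.comp hu) fun i =>
    le_limsup_of_frequently_le' ((h i).mono fun _ hx => ENNReal.ofReal_le_ofReal hx)

end

theorem liminf_zero_limsup_top_general (z w δΛ : ℝ) (hz : 0 < z) (hzw : z < w) (hδΛ : 0 < δΛ)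
    (Nrand : ℝ → ℝ)
    (C' D' : ℝ) (hC' : 0 < C')
    (hwin : ∀ m : ℤ, ∀ M : ℝ, ∃ T ≥ M,
      C' * (z / w) ^ (δΛ * (m : ℝ)) ≤ Nrand T / Real.exp (δΛ * T) ∧
      Nrand T / Real.exp (δΛ * T) ≤ D' * (z / w) ^ (δΛ * (m : ℝ))) :
    liminf (fun T => ENNReal.ofReal (Nrand T / Real.exp (δΛ * T))) atTop = 0 ∧
      limsup (fun T => ENNReal.ofReal (Nrand T / Real.exp (δΛ * T))) atTop = ⊤ := by
  have hq₀ : 0 < z / w := div_pos hz (hz.trans hzw)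
  have hq₁ : z / w < 1 := (div_lt_one (hz.trans hzw)).2 hzw
  have hfreq (m : ℤ) := frequently_atTop.2 (hwin m)
  constructor
  · refine liminf_ofReal_eq_zero_of_frequently_le (L := atTop) ?_ fun m =>
      (hfreq m).mono fun _ h => h.2
    simpa using ((tendsto_rpow_atTop_of_base_lt_one _ (by linarith) hq₁).comp
      (tendsto_intCast_atTop_atTop.const_mul_atTop hδΛ)).const_mul D'
  · refine limsup_ofReal_eq_top_of_frequently_ge (L := atBot) ?_ fun m =>
      (hfreq m).mono fun _ h => h.1
    exact ((tendsto_rpow_atBot_of_base_lt_one _ hq₀ hq₁).comp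
      ((tendsto_intCast_atBot_iff.2 tendsto_id).const_mul_atBot hδΛ)).const_mul_atTop hC'

/-- if for every integer window `m` the ratio `N_ρ^λ(T)/exp(δ_Λ T)` is
pinched between `C'(z/w)^{δ_Λ m}` and `D'(z/w)^{δ_Λ m}` along arbitrarily large times
(the fluctuation property of the random walk), then
`liminf N_ρ^λ(T)/exp(δ_Λ T) = 0` and `limsup N_ρ^λ(T)/exp(δ_Λ T) = ∞`. -/
theorem liminf_zero_limsup_top (z w δΛ : ℝ) (hz : 0 < z) (hzw : z < w) (hδΛ : 0 < δΛ)
    (Nrand : ℝ → ℝ) (hN0 : ∀ T, 0 ≤ Nrand T)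
    (C' D' : ℝ) (hC' : 0 < C') (hD' : 0 < D')
    (hwin : ∀ m : ℤ, ∀ M : ℝ, ∃ T ≥ M,
      C' * (z / w) ^ (δΛ * (m : ℝ)) ≤ Nrand T / Real.exp (δΛ * T) ∧
      Nrand T / Real.exp (δΛ * T) ≤ D' * (z / w) ^ (δΛ * (m : ℝ))) :
    liminf (fun T => ENNReal.ofReal (Nrand T / Real.exp (δΛ * T))) atTop = 0 ∧
      limsup (fun T => ENNReal.ofReal (Nrand T / Real.exp (δΛ * T))) atTop = ⊤ :=
  liminf_zero_limsup_top_general z w δΛ hz hzw hδΛ Nrand C' D' hC' hwin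
end

section
/- Let θ(s) = 1 − (R^s/2^s + R^s/3^s)^m where R ∈ (0,1) satisfies that log(2/3)/log(R/2) is irrational. Then every zero of θ in ℂ is simple, i.e. θ(s) = 0 implies θ'(s) ≠ 0. -/
/-!
At a common zero of `θ` and `θ'` one has `(R/2)^s log(R/2) + (R/3)^s log(R/3) = 0`, so
`(2/3)^s = (R/3)^s / (R/2)^s` is a negative real number and `(R/2)^s + (R/3)^s` is a real
multiple of `(R/2)^s`. Hence `Im s ≠ 0`, and both `Im s · log(2/3)` and `Im s · m log(R/2)` are
integer multiples of `π`, which makes `log(2/3) / log(R/2)` rational.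
-/

noncomputable section

/-- `θ(s) = 1 − ((R/2)^s + (R/3)^s)^m`, with principal complex powers of the
positive real bases `R/2` and `R/3`. -/
def theta (R : ℝ) (m : ℕ) (s : ℂ) : ℂ :=
  1 - (((R / 2 : ℝ) : ℂ) ^ s + ((R / 3 : ℝ) : ℂ) ^ s) ^ m

open Complex

theorem not_irrational_div_of_mul_eq_int_mul {t x y c : ℝ} {k l : ℤ} (ht : t ≠ 0) (hy : y ≠ 0)
    (hx : t * x = k * c) (hly : t * y = l * c) : ¬Irrational (x / y) := by
  have hlc : (l : ℝ) * c ≠ 0 := hly ▸ mul_ne_zero ht hy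
  have hl : (l : ℝ) ≠ 0 := left_ne_zero_of_mul hlc
  have hc : c ≠ 0 := right_ne_zero_of_mul hlc
  have : x / y = ((k / l : ℚ) : ℝ) := by
    push_cast
    rw [div_eq_div_iff hy hl]
    apply mul_left_cancel₀ (mul_ne_zero ht hc)
    linear_combination (l : ℝ) * c * hx - (k : ℝ) * c * hly
  exact this ▸ Rat.not_irrational _

namespace Complex

variable {a b : ℝ} {s : ℂ}

theorem exists_int_mul_pi_of_ofReal_cpow_im_eq_zero (ha : 0 < a) (h : ((a : ℂ) ^ s).im = 0) :
    ∃ k : ℤ, s.im * Real.log a = k * Real.pi := by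
  rw [cpow_def_of_ne_zero (ofReal_ne_zero.mpr ha.ne'), ← ofReal_log ha.le, exp_im] at h
  have hsin : Real.sin (s.im * Real.log a) = 0 := by
    simpa [Real.exp_ne_zero, mul_comm] using h
  exact Real.sin_eq_zero_iff.mp hsin |>.imp fun _ hk ↦ hk.symm

theorem im_ne_zero_of_ofReal_cpow_re_neg (ha : 0 ≤ a) (h : ((a : ℂ) ^ s).re < 0) : s.im ≠ 0 := by
  intro him
  have hs : s = (s.re : ℂ) := ext rfl (by simp [him])
  rw [hs, ← ofReal_cpow ha, ofReal_re] at h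
  exact (Real.rpow_nonneg ha _).not_gt h

theorem ofReal_cpow_eq_mul_of_critical (hlb : Real.log b ≠ 0)
    (h : (a : ℂ) ^ s * Real.log a + (b : ℂ) ^ s * Real.log b = 0) :
    (b : ℂ) ^ s = (a : ℂ) ^ s * ((-(Real.log a / Real.log b) : ℝ) : ℂ) := by
  have hlb' : ((Real.log b : ℝ) : ℂ) ≠ 0 := ofReal_ne_zero.mpr hlb
  push_cast
  field_simp
  linear_combination h

theorem ofReal_div_cpow_eq_of_cpow_eq_mul (ha : 0 < a) (hb : 0 ≤ b) {r : ℂ}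
    (h : (b : ℂ) ^ s = (a : ℂ) ^ s * r) : ((b / a : ℝ) : ℂ) ^ s = r := by
  have ha0 : (a : ℂ) ^ s ≠ 0 := by simp [cpow_eq_zero_iff, ha.ne']
  rw [ofReal_div, div_cpow_ofReal_nonneg hb ha.le, h, mul_div_cancel_left₀ _ ha0]

theorem ofReal_cpow_natCast_mul_im_eq_zero {r : ℝ} {m : ℕ}
    (hb : (b : ℂ) ^ s = (a : ℂ) ^ s * r) (h : ((a : ℂ) ^ s + (b : ℂ) ^ s) ^ m = 1) :
    ((a : ℂ) ^ ((m : ℂ) * s)).im = 0 := by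
  have h' : ((a : ℂ) ^ s) ^ m * (((1 + r) ^ m : ℝ) : ℂ) = 1 := by
    rw [ofReal_pow, ofReal_add, ofReal_one, ← mul_pow, mul_one_add, ← hb, h]
  rw [cpow_nat_mul, eq_inv_of_mul_eq_one_left h', ← ofReal_inv, ofReal_im]

end Complex

theorem hasDerivAt_theta {R : ℝ} (hR : 0 < R) (m : ℕ) (s : ℂ) :
    HasDerivAt (theta R m)
      (-(m * (((R / 2 : ℝ) : ℂ) ^ s + ((R / 3 : ℝ) : ℂ) ^ s) ^ (m - 1) *
        (((R / 2 : ℝ) : ℂ) ^ s * Real.log (R / 2) + ((R / 3 : ℝ) : ℂ) ^ s * Real.log (R / 3))))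
      s := by
  have hpow (c : ℝ) (hc : 0 < c) :
      HasDerivAt (fun z : ℂ ↦ (c : ℂ) ^ z) ((c : ℂ) ^ s * Real.log c) s := by
    rw [ofReal_log hc.le]
    exact (hasStrictDerivAt_const_cpow (.inl (ofReal_ne_zero.mpr hc.ne'))).hasDerivAt
  exact (((hpow _ (by positivity)).add (hpow _ (by positivity))).pow m).const_sub 1

/-- if `0 < R < 1` and `log(2/3)/log(R/2)` is irrational, then every
zero of `θ` is simple: `θ(s) = 0 → θ'(s) ≠ 0`. -/
theorem theta_zeros_simple (R : ℝ) (hR : 0 < R ∧ R < 1) (m : ℕ) (hm : 1 ≤ m)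
    (hirr : Irrational (Real.log (2 / 3) / Real.log (R / 2))) (s : ℂ)
    (hzero : theta R m s = 0) : deriv (theta R m) s ≠ 0 := by
  obtain ⟨hR0, hR1⟩ := hR
  have hm0 : m ≠ 0 := by omega
  rw [(hasDerivAt_theta hR0 m s).deriv]
  intro hderiv
  rw [theta, sub_eq_zero, eq_comm] at hzero
  set a : ℝ := R / 2
  set b : ℝ := R / 3
  have hla : Real.log a < 0 := Real.log_neg (by positivity) (by simp only [a]; linarith)
  have hlb : Real.log b < 0 := Real.log_neg (by positivity) (by simp only [b]; linarith)
  have hcrit : (a : ℂ) ^ s * Real.log a + (b : ℂ) ^ s * Real.log b = 0 := by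
    have hF0 : (a : ℂ) ^ s + (b : ℂ) ^ s ≠ 0 := by
      rintro h; simp [h, zero_pow hm0] at hzero
    simpa [hF0, hm0] using hderiv
  set β : ℝ := -(Real.log a / Real.log b)
  have hb : (b : ℂ) ^ s = (a : ℂ) ^ s * β := ofReal_cpow_eq_mul_of_critical hlb.ne hcrit
  have hratio : ((2 / 3 : ℝ) : ℂ) ^ s = β := by
    rw [show (2 / 3 : ℝ) = b / a by simp only [a, b]; field_simp]
    exact ofReal_div_cpow_eq_of_cpow_eq_mul (by positivity) (by positivity) hb
  obtain ⟨k, hk⟩ := exists_int_mul_pi_of_ofReal_cpow_im_eq_zero (a := 2 / 3) (by norm_num)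
    (by rw [hratio, ofReal_im])
  have him : s.im ≠ 0 := im_ne_zero_of_ofReal_cpow_re_neg (a := 2 / 3) (by norm_num)
    (by rw [hratio, ofReal_re]; exact neg_neg_of_pos (div_pos_of_neg_of_neg hla hlb))
  obtain ⟨l, hl⟩ := exists_int_mul_pi_of_ofReal_cpow_im_eq_zero (by positivity)
    (ofReal_cpow_natCast_mul_im_eq_zero hb hzero)
  have hirr' := hirr.div_natCast hm0
  rw [div_div, mul_comm] at hirr'
  exact not_irrational_div_of_mul_eq_int_mul him (mul_ne_zero (by simpa) hla.ne) hk
    (by simpa [mul_assoc, mul_left_comm] using hl) hirr'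
end
end
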